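/- arXiv:2208.10347 — 3 statements merged into one kernel-verified Lean document; each statement's English description precedes it below -/
import Mathlib

section
/- Given any 2-nested word automaton A=(Q,Q0,Qf,Σ,P,Δ), one can build a 2-nested word automaton A'=(Q',q0',Qf',Σ,Q',Δ') which is in weakly-hierarchical post form and satisfies L(A)=L(A'). -/
/-- A matching relation of length `n`, on positions `1, …, n`. -/
structure Matching (n : ℕ) where
  rel : ℕ → ℕ → Prop
  ordered : ∀ i j, rel i j → 1 ≤ i ∧ i < j ∧ j ≤ n
  unique : ∀ i j k l, rel i j → rel k l →
    (i = k ∨ i = l ∨ j = k ∨ j = l) → i = k ∧ j = l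
  noncrossing : ∀ i j k l, rel i j → rel k l → i < k → k < j → l < j

/-- A 2-nested word: a word together with two matchings of its length. -/
structure TwoNW (α : Type) where
  word : List α
  M1 : Matching word.length
  M2 : Matching word.length

def Matching.IsCall {n : ℕ} (M : Matching n) (i : ℕ) : Prop := ∃ j, M.rel i j
def Matching.IsRet {n : ℕ} (M : Matching n) (i : ℕ) : Prop := ∃ j, M.rel j i
def Matching.IsInt {n : ℕ} (M : Matching n) (i : ℕ) : Prop := ¬ M.IsCall i ∧ ¬ M.IsRet i

/-- `(i1,i2,i3,i4)` is a 2-wave of the pair of matchings `(M1, M2)`. -/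
def IsTwoWaveQuad {n : ℕ} (M1 M2 : Matching n) (i1 i2 i3 i4 : ℕ) : Prop :=
  i1 < i2 ∧ i2 < i3 ∧ i3 < i4 ∧
  M1.rel i1 i2 ∧ M1.rel i3 i4 ∧ M2.rel i2 i3 ∧ M2.rel i1 i4

/-- A 2-wave structure: every arch of `M1 ∪ M2` is an arch of some 2-wave. -/
def IsWaveStructure {n : ℕ} (M1 M2 : Matching n) : Prop :=
  (∀ i j, M1.rel i j → ∃ i1 i2 i3 i4, IsTwoWaveQuad M1 M2 i1 i2 i3 i4 ∧
      ((i = i1 ∧ j = i2) ∨ (i = i3 ∧ j = i4))) ∧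
  (∀ i j, M2.rel i j → ∃ i1 i2 i3 i4, IsTwoWaveQuad M1 M2 i1 i2 i3 i4 ∧
      ((i = i2 ∧ j = i3) ∨ (i = i1 ∧ j = i4)))

/-- A 2-wave word. -/
def TwoNW.IsWaveWord {α : Type} (ω : TwoNW α) : Prop := IsWaveStructure ω.M1 ω.M2

/-- A 2-nested word automaton (2NWA); each transition table is presented as a
set of (input, output) pairs. -/
structure TwoNWA (α Q P : Type) where
  init : Set Q
  final : Set Q
  Δcc : Set ((Q × α) × (P × P × Q))
  Δrc : Set ((Q × P × α) × (P × Q))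
  Δcr : Set ((Q × P × α) × (P × Q))
  Δrr : Set ((Q × P × P × α) × Q)
  Δci : Set ((Q × α) × (P × Q))
  Δic : Set ((Q × α) × (P × Q))
  Δri : Set ((Q × P × α) × Q)
  Δir : Set ((Q × P × α) × Q)
  Δii : Set ((Q × α) × Q)

/-- The local run condition at position `i` (with `1 ≤ i ≤ |w|`): `ℓ` is the
sequence of linear states, and `h1 i` (resp. `h2 i`) is the hierarchical state
labelling the `M1`- (resp. `M2`-) arch whose call position is `i`. -/
def TwoNWA.RunAt {α Q P : Type} (A : TwoNWA α Q P) (ω : TwoNW α)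
    (ℓ : ℕ → Q) (h1 h2 : ℕ → P) (i : ℕ) : Prop :=
  ∃ a, ω.word[i - 1]? = some a ∧
    ((ω.M1.IsCall i ∧ ω.M2.IsCall i ∧ ((ℓ (i-1), a), (h1 i, h2 i, ℓ i)) ∈ A.Δcc)
   ∨ (∃ j, ω.M1.rel j i ∧ ω.M2.IsCall i ∧ ((ℓ (i-1), h1 j, a), (h2 i, ℓ i)) ∈ A.Δrc)
   ∨ (ω.M1.IsCall i ∧ (∃ j, ω.M2.rel j i ∧ ((ℓ (i-1), h2 j, a), (h1 i, ℓ i)) ∈ A.Δcr))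
   ∨ (∃ j k, ω.M1.rel j i ∧ ω.M2.rel k i ∧ ((ℓ (i-1), h1 j, h2 k, a), ℓ i) ∈ A.Δrr)
   ∨ (ω.M1.IsCall i ∧ ω.M2.IsInt i ∧ ((ℓ (i-1), a), (h1 i, ℓ i)) ∈ A.Δci)
   ∨ (ω.M1.IsInt i ∧ ω.M2.IsCall i ∧ ((ℓ (i-1), a), (h2 i, ℓ i)) ∈ A.Δic)
   ∨ (∃ j, ω.M1.rel j i ∧ ω.M2.IsInt i ∧ ((ℓ (i-1), h1 j, a), ℓ i) ∈ A.Δri)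
   ∨ (ω.M1.IsInt i ∧ (∃ j, ω.M2.rel j i ∧ ((ℓ (i-1), h2 j, a), ℓ i) ∈ A.Δir))
   ∨ (ω.M1.IsInt i ∧ ω.M2.IsInt i ∧ ((ℓ (i-1), a), ℓ i) ∈ A.Δii))

def TwoNWA.IsRun {α Q P : Type} (A : TwoNWA α Q P) (ω : TwoNW α)
    (ℓ : ℕ → Q) (h1 h2 : ℕ → P) : Prop :=
  ∀ i, 1 ≤ i → i ≤ ω.word.length → A.RunAt ω ℓ h1 h2 i

def TwoNWA.Accepts {α Q P : Type} (A : TwoNWA α Q P) (ω : TwoNW α) : Prop :=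
  ∃ ℓ h1 h2, A.IsRun ω ℓ h1 h2 ∧ ℓ 0 ∈ A.init ∧ ℓ ω.word.length ∈ A.final

/-- The language of 2-nested words accepted by `A`. -/
def TwoNWA.lang {α Q P : Type} (A : TwoNWA α Q P) : Set (TwoNW α) :=
  { ω | A.Accepts ω }

/-- The language of 2-wave words accepted by `A`. -/
def TwoNWA.langWW {α Q P : Type} (A : TwoNWA α Q P) : Set (TwoNW α) :=
  { ω | A.Accepts ω ∧ ω.IsWaveWord }

/-- There is a run of `A` on `ω` from linear state `q` to linear state `q'`. -/
def TwoNWA.Exec {α Q P : Type} (A : TwoNWA α Q P) (ω : TwoNW α) (q q' : Q) : Prop :=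
  ∃ ℓ h1 h2, A.IsRun ω ℓ h1 h2 ∧ ℓ 0 = q ∧ ℓ ω.word.length = q'

/-- Deterministic 2NWA: a single initial state, and each transition table
induces a function from inputs to outputs. -/
def TwoNWA.Deterministic {α Q P : Type} (A : TwoNWA α Q P) : Prop :=
  (∃ q0, A.init = {q0}) ∧
  (∀ x y y', (x, y) ∈ A.Δcc → (x, y') ∈ A.Δcc → y = y') ∧
  (∀ x y y', (x, y) ∈ A.Δrc → (x, y') ∈ A.Δrc → y = y') ∧
  (∀ x y y', (x, y) ∈ A.Δcr → (x, y') ∈ A.Δcr → y = y') ∧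
  (∀ x y y', (x, y) ∈ A.Δrr → (x, y') ∈ A.Δrr → y = y') ∧
  (∀ x y y', (x, y) ∈ A.Δci → (x, y') ∈ A.Δci → y = y') ∧
  (∀ x y y', (x, y) ∈ A.Δic → (x, y') ∈ A.Δic → y = y') ∧
  (∀ x y y', (x, y) ∈ A.Δri → (x, y') ∈ A.Δri → y = y') ∧
  (∀ x y y', (x, y) ∈ A.Δir → (x, y') ∈ A.Δir → y = y') ∧
  (∀ x y y', (x, y) ∈ A.Δii → (x, y') ∈ A.Δii → y = y')

/-- Complete 2NWA: each transition table provides an output for every input. -/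
def TwoNWA.Complete {α Q P : Type} (A : TwoNWA α Q P) : Prop :=
  (∀ x, ∃ y, (x, y) ∈ A.Δcc) ∧ (∀ x, ∃ y, (x, y) ∈ A.Δrc) ∧
  (∀ x, ∃ y, (x, y) ∈ A.Δcr) ∧ (∀ x, ∃ y, (x, y) ∈ A.Δrr) ∧
  (∀ x, ∃ y, (x, y) ∈ A.Δci) ∧ (∀ x, ∃ y, (x, y) ∈ A.Δic) ∧
  (∀ x, ∃ y, (x, y) ∈ A.Δri) ∧ (∀ x, ∃ y, (x, y) ∈ A.Δir) ∧
  (∀ x, ∃ y, (x, y) ∈ A.Δii)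

/-- Weakly-hierarchical post form: hierarchical states are the linear states,
and every hierarchical output of a transition equals its target linear state. -/
def TwoNWA.PostForm {α Q : Type} (A : TwoNWA α Q Q) : Prop :=
  (∀ t ∈ A.Δcc, t.2.1 = t.2.2.2 ∧ t.2.2.1 = t.2.2.2) ∧
  (∀ t ∈ A.Δrc, t.2.1 = t.2.2) ∧
  (∀ t ∈ A.Δcr, t.2.1 = t.2.2) ∧
  (∀ t ∈ A.Δci, t.2.1 = t.2.2) ∧
  (∀ t ∈ A.Δic, t.2.1 = t.2.2)

/-- Nice 2NWA: in every non-internal transition all hierarchical states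
involved are equal. -/
def TwoNWA.Nice {α Q P : Type} (A : TwoNWA α Q P) : Prop :=
  (∀ t ∈ A.Δcc, t.2.1 = t.2.2.1) ∧
  (∀ t ∈ A.Δrc, t.1.2.1 = t.2.1) ∧
  (∀ t ∈ A.Δcr, t.1.2.1 = t.2.1) ∧
  (∀ t ∈ A.Δrr, t.1.2.1 = t.1.2.2.1)

/-- A regular language of 2-nested words. -/
def RegularTwoNWL {α : Type} (L : Set (TwoNW α)) : Prop :=
  ∃ (Q P : Type) (_ : Finite Q) (_ : Finite P) (A : TwoNWA α Q P), A.lang = L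


/-! The linear states of the post-form automaton are triples `(q, p₁, p₂)`: besides the state
`q` of `A`, they guess the hierarchical states `p₁`, `p₂` that `A` emits on the `M1`- and
`M2`-arches called at the current position (components that no call uses are arbitrary).
Every transition outputs its whole target triple as hierarchical state, and a return reads
off the relevant component of the triple stored at its call. -/

namespace TwoNWA

variable {α Q P : Type}

def toPostForm (A : TwoNWA α Q P) : TwoNWA α (Q × P × P) (Q × P × P) where
  init := {s | s.1 ∈ A.init}
  final := {s | s.1 ∈ A.final}
  Δcc := {t | t.2.1 = t.2.2.2 ∧ t.2.2.1 = t.2.2.2 ∧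
    ((t.1.1.1, t.1.2), (t.2.2.2.2.1, t.2.2.2.2.2, t.2.2.2.1)) ∈ A.Δcc}
  Δrc := {t | t.2.1 = t.2.2 ∧
    ((t.1.1.1, t.1.2.1.2.1, t.1.2.2), (t.2.2.2.2, t.2.2.1)) ∈ A.Δrc}
  Δcr := {t | t.2.1 = t.2.2 ∧
    ((t.1.1.1, t.1.2.1.2.2, t.1.2.2), (t.2.2.2.1, t.2.2.1)) ∈ A.Δcr}
  Δrr := {t | ((t.1.1.1, t.1.2.1.2.1, t.1.2.2.1.2.2, t.1.2.2.2), t.2.1) ∈ A.Δrr}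
  Δci := {t | t.2.1 = t.2.2 ∧ ((t.1.1.1, t.1.2), (t.2.2.2.1, t.2.2.1)) ∈ A.Δci}
  Δic := {t | t.2.1 = t.2.2 ∧ ((t.1.1.1, t.1.2), (t.2.2.2.2, t.2.2.1)) ∈ A.Δic}
  Δri := {t | ((t.1.1.1, t.1.2.1.2.1, t.1.2.2), t.2.1) ∈ A.Δri}
  Δir := {t | ((t.1.1.1, t.1.2.1.2.2, t.1.2.2), t.2.1) ∈ A.Δir}
  Δii := {t | ((t.1.1.1, t.1.2), t.2.1) ∈ A.Δii}

theorem toPostForm_postForm (A : TwoNWA α Q P) : A.toPostForm.PostForm :=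
  ⟨fun _ ht => ⟨ht.1, ht.2.1⟩, fun _ ht => ht.1, fun _ ht => ht.1, fun _ ht => ht.1,
    fun _ ht => ht.1⟩

theorem RunAt.of_transitions {Q' P' : Type} {A : TwoNWA α Q P} {B : TwoNWA α Q' P'}
    {ω : TwoNW α} {ℓ : ℕ → Q} {h1 h2 : ℕ → P} {ℓ' : ℕ → Q'} {h1' h2' : ℕ → P'} {i : ℕ}
    (hcc : ∀ a, ((ℓ (i-1), a), (h1 i, h2 i, ℓ i)) ∈ A.Δcc →
      ((ℓ' (i-1), a), (h1' i, h2' i, ℓ' i)) ∈ B.Δcc)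
    (hrc : ∀ a j, ((ℓ (i-1), h1 j, a), (h2 i, ℓ i)) ∈ A.Δrc →
      ((ℓ' (i-1), h1' j, a), (h2' i, ℓ' i)) ∈ B.Δrc)
    (hcr : ∀ a j, ((ℓ (i-1), h2 j, a), (h1 i, ℓ i)) ∈ A.Δcr →
      ((ℓ' (i-1), h2' j, a), (h1' i, ℓ' i)) ∈ B.Δcr)
    (hrr : ∀ a j k, ((ℓ (i-1), h1 j, h2 k, a), ℓ i) ∈ A.Δrr →
      ((ℓ' (i-1), h1' j, h2' k, a), ℓ' i) ∈ B.Δrr)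
    (hci : ∀ a, ((ℓ (i-1), a), (h1 i, ℓ i)) ∈ A.Δci → ((ℓ' (i-1), a), (h1' i, ℓ' i)) ∈ B.Δci)
    (hic : ∀ a, ((ℓ (i-1), a), (h2 i, ℓ i)) ∈ A.Δic → ((ℓ' (i-1), a), (h2' i, ℓ' i)) ∈ B.Δic)
    (hri : ∀ a j, ((ℓ (i-1), h1 j, a), ℓ i) ∈ A.Δri → ((ℓ' (i-1), h1' j, a), ℓ' i) ∈ B.Δri)
    (hir : ∀ a j, ((ℓ (i-1), h2 j, a), ℓ i) ∈ A.Δir → ((ℓ' (i-1), h2' j, a), ℓ' i) ∈ B.Δir)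
    (hii : ∀ a, ((ℓ (i-1), a), ℓ i) ∈ A.Δii → ((ℓ' (i-1), a), ℓ' i) ∈ B.Δii)
    (h : A.RunAt ω ℓ h1 h2 i) : B.RunAt ω ℓ' h1' h2' i := by
  obtain ⟨a, ha, h⟩ := h
  refine ⟨a, ha, ?_⟩
  rcases h with ⟨c1, c2, t⟩ | ⟨j, r1, c2, t⟩ | ⟨c1, j, r2, t⟩ | ⟨j, k, r1, r2, t⟩ |
    ⟨c1, n2, t⟩ | ⟨n1, c2, t⟩ | ⟨j, r1, n2, t⟩ | ⟨n1, j, r2, t⟩ | ⟨n1, n2, t⟩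
  · exact Or.inl ⟨c1, c2, hcc a t⟩
  · exact Or.inr <| Or.inl ⟨j, r1, c2, hrc a j t⟩
  · exact Or.inr <| Or.inr <| Or.inl ⟨c1, j, r2, hcr a j t⟩
  · exact Or.inr <| Or.inr <| Or.inr <| Or.inl ⟨j, k, r1, r2, hrr a j k t⟩
  · exact Or.inr <| Or.inr <| Or.inr <| Or.inr <| Or.inl ⟨c1, n2, hci a t⟩
  · exact Or.inr <| Or.inr <| Or.inr <| Or.inr <| Or.inr <| Or.inl ⟨n1, c2, hic a t⟩
  · exact Or.inr <| Or.inr <| Or.inr <| Or.inr <| Or.inr <| Or.inr <| Or.inl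
      ⟨j, r1, n2, hri a j t⟩
  · exact Or.inr <| Or.inr <| Or.inr <| Or.inr <| Or.inr <| Or.inr <| Or.inr <| Or.inl
      ⟨n1, j, r2, hir a j t⟩
  · exact Or.inr <| Or.inr <| Or.inr <| Or.inr <| Or.inr <| Or.inr <| Or.inr <| Or.inr
      ⟨n1, n2, hii a t⟩

theorem accepts_toPostForm_of_accepts {A : TwoNWA α Q P} {ω : TwoNW α} (hA : A.Accepts ω) :
    A.toPostForm.Accepts ω := by
  obtain ⟨ℓ, h1, h2, hrun, hinit, hfinal⟩ := hA
  let L i := (ℓ i, h1 i, h2 i)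
  refine ⟨L, L, L, fun i hi hin => (hrun i hi hin).of_transitions ?_ ?_ ?_ ?_ ?_ ?_ ?_ ?_ ?_,
    hinit, hfinal⟩ <;> intros <;> simp_all [toPostForm, L]

theorem accepts_of_accepts_toPostForm {A : TwoNWA α Q P} {ω : TwoNW α}
    (hA : A.toPostForm.Accepts ω) : A.Accepts ω := by
  obtain ⟨L, H1, H2, hrun, hinit, hfinal⟩ := hA
  -- Arch labels are read from `H1`, `H2` rather than `L`: returns then match at once, and at
  -- calls the post-form constraint `H1 i = L i` (resp. `H2 i = L i`) makes the two agree.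
  refine ⟨fun i => (L i).1, fun i => (H1 i).2.1, fun i => (H2 i).2.2,
    fun i hi hin => (hrun i hi hin).of_transitions ?_ ?_ ?_ ?_ ?_ ?_ ?_ ?_ ?_,
    hinit, hfinal⟩ <;> intros <;> simp_all [toPostForm]

theorem lang_toPostForm (A : TwoNWA α Q P) : A.toPostForm.lang = A.lang :=
  Set.ext fun _ => ⟨accepts_of_accepts_toPostForm, accepts_toPostForm_of_accepts⟩

end TwoNWA

theorem postForm_normalization_general (α Q P : Type) [Finite Q] [Finite P]
    (A : TwoNWA α Q P) :
    ∃ (Q' : Type) (_ : Finite Q') (A' : TwoNWA α Q' Q'),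
      A'.PostForm ∧ A.lang = A'.lang :=
  ⟨Q × P × P, inferInstance, A.toPostForm, A.toPostForm_postForm, A.lang_toPostForm.symm⟩

/-- Every 2NWA can be transformed into an equivalent 2NWA in
weakly-hierarchical post form. -/
theorem postForm_normalization (α Q P : Type) [Finite α] [Finite Q] [Finite P]
    (A : TwoNWA α Q P) :
    ∃ (Q' : Type) (_ : Finite Q') (A' : TwoNWA α Q' Q'),
      A'.PostForm ∧ A.lang = A'.lang :=
  postForm_normalization_general α Q P A
end

section
/- If L' and L'' are regular languages of 2-nested words over Σ, then L' ∩ L'' is a regular language of 2-nested words over Σ. -/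
namespace Matching

variable {n : ℕ} (M : Matching n) {i j : ℕ}

lemma not_isCall_of_rel (h : M.rel j i) : ¬ M.IsCall i := by
  rintro ⟨k, hk⟩
  obtain ⟨rfl, -⟩ := M.unique j i i k h hk (.inr (.inr (.inl rfl)))
  exact (M.ordered j j h).2.1.false

lemma eq_of_rel_of_rel {j' : ℕ} (h : M.rel j i) (h' : M.rel j' i) : j = j' :=
  (M.unique j i j' i h h' (.inr (.inr (.inr rfl)))).1

end Matching

namespace TwoNWA

variable {α Q' P' Q'' P'' : Type}

def prod (A' : TwoNWA α Q' P') (A'' : TwoNWA α Q'' P'') :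
    TwoNWA α (Q' × Q'') (P' × P'') where
  init := {q | q.1 ∈ A'.init ∧ q.2 ∈ A''.init}
  final := {q | q.1 ∈ A'.final ∧ q.2 ∈ A''.final}
  Δcc := {t | ((t.1.1.1, t.1.2), (t.2.1.1, t.2.2.1.1, t.2.2.2.1)) ∈ A'.Δcc ∧
              ((t.1.1.2, t.1.2), (t.2.1.2, t.2.2.1.2, t.2.2.2.2)) ∈ A''.Δcc}
  Δrc := {t | ((t.1.1.1, t.1.2.1.1, t.1.2.2), (t.2.1.1, t.2.2.1)) ∈ A'.Δrc ∧
              ((t.1.1.2, t.1.2.1.2, t.1.2.2), (t.2.1.2, t.2.2.2)) ∈ A''.Δrc}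
  Δcr := {t | ((t.1.1.1, t.1.2.1.1, t.1.2.2), (t.2.1.1, t.2.2.1)) ∈ A'.Δcr ∧
              ((t.1.1.2, t.1.2.1.2, t.1.2.2), (t.2.1.2, t.2.2.2)) ∈ A''.Δcr}
  Δrr := {t | ((t.1.1.1, t.1.2.1.1, t.1.2.2.1.1, t.1.2.2.2), t.2.1) ∈ A'.Δrr ∧
              ((t.1.1.2, t.1.2.1.2, t.1.2.2.1.2, t.1.2.2.2), t.2.2) ∈ A''.Δrr}
  Δci := {t | ((t.1.1.1, t.1.2), (t.2.1.1, t.2.2.1)) ∈ A'.Δci ∧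
              ((t.1.1.2, t.1.2), (t.2.1.2, t.2.2.2)) ∈ A''.Δci}
  Δic := {t | ((t.1.1.1, t.1.2), (t.2.1.1, t.2.2.1)) ∈ A'.Δic ∧
              ((t.1.1.2, t.1.2), (t.2.1.2, t.2.2.2)) ∈ A''.Δic}
  Δri := {t | ((t.1.1.1, t.1.2.1.1, t.1.2.2), t.2.1) ∈ A'.Δri ∧
              ((t.1.1.2, t.1.2.1.2, t.1.2.2), t.2.2) ∈ A''.Δri}
  Δir := {t | ((t.1.1.1, t.1.2.1.1, t.1.2.2), t.2.1) ∈ A'.Δir ∧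
              ((t.1.1.2, t.1.2.1.2, t.1.2.2), t.2.2) ∈ A''.Δir}
  Δii := {t | ((t.1.1.1, t.1.2), t.2.1) ∈ A'.Δii ∧
              ((t.1.1.2, t.1.2), t.2.2) ∈ A''.Δii}

variable (A' : TwoNWA α Q' P') (A'' : TwoNWA α Q'' P'') (ω : TwoNW α)
  (ℓ : ℕ → Q' × Q'') (h1 h2 : ℕ → P' × P'')

lemma runAt_prod_iff (i : ℕ) :
    (A'.prod A'').RunAt ω ℓ h1 h2 i ↔
      A'.RunAt ω (Prod.fst ∘ ℓ) (Prod.fst ∘ h1) (Prod.fst ∘ h2) i ∧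
      A''.RunAt ω (Prod.snd ∘ ℓ) (Prod.snd ∘ h1) (Prod.snd ∘ h2) i := by
  simp only [RunAt, prod, Set.mem_ofPred_eq, Function.comp_apply, Matching.IsInt,
    Matching.IsRet]
  constructor
  · rintro ⟨a, ha, h⟩
    refine ⟨⟨a, ha, ?_⟩, ⟨a, ha, ?_⟩⟩ <;> cases_type* Or <;> grind
  · rintro ⟨⟨a, ha, h⟩, ⟨b, hb, h'⟩⟩
    obtain rfl : a = b := Option.some_injective _ (ha.symm.trans hb)
    refine ⟨a, ha, ?_⟩
    cases_type* Or <;> grind [Matching.not_isCall_of_rel, Matching.eq_of_rel_of_rel]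

lemma isRun_prod_iff :
    (A'.prod A'').IsRun ω ℓ h1 h2 ↔
      A'.IsRun ω (Prod.fst ∘ ℓ) (Prod.fst ∘ h1) (Prod.fst ∘ h2) ∧
      A''.IsRun ω (Prod.snd ∘ ℓ) (Prod.snd ∘ h1) (Prod.snd ∘ h2) := by
  simp only [IsRun, runAt_prod_iff, ← forall_and]

lemma lang_prod : (A'.prod A'').lang = A'.lang ∩ A''.lang := by
  ext ω
  constructor
  · rintro ⟨ℓ, h1, h2, hrun, hinit, hfin⟩
    obtain ⟨hrun', hrun''⟩ := (isRun_prod_iff A' A'' ω ℓ h1 h2).1 hrun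
    exact ⟨⟨_, _, _, hrun', hinit.1, hfin.1⟩, ⟨_, _, _, hrun'', hinit.2, hfin.2⟩⟩
  · rintro ⟨⟨ℓ', h1', h2', hrun', hinit', hfin'⟩, ⟨ℓ'', h1'', h2'', hrun'', hinit'', hfin''⟩⟩
    refine ⟨fun n => (ℓ' n, ℓ'' n), fun n => (h1' n, h1'' n), fun n => (h2' n, h2'' n),
      ?_, ⟨hinit', hinit''⟩, ⟨hfin', hfin''⟩⟩
    exact (isRun_prod_iff A' A'' ω _ _ _).2 ⟨hrun', hrun''⟩

end TwoNWA

theorem regular_inter_general (α : Type) (L' L'' : Set (TwoNW α))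
    (h' : RegularTwoNWL L') (h'' : RegularTwoNWL L'') :
    RegularTwoNWL (L' ∩ L'') := by
  obtain ⟨Q', P', _, _, A', rfl⟩ := h'
  obtain ⟨Q'', P'', _, _, A'', rfl⟩ := h''
  exact ⟨Q' × Q'', P' × P'', inferInstance, inferInstance, A'.prod A'', A'.lang_prod A''⟩

/-- Regular languages of 2-nested words are closed under
intersection. -/
theorem regular_inter (α : Type) [Finite α] (L' L'' : Set (TwoNW α))
    (h' : RegularTwoNWL L') (h'' : RegularTwoNWL L'') :
    RegularTwoNWL (L' ∩ L'') :=
  regular_inter_general α L' L'' h' h''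
end

section
/- Let A and B be disjoint finite alphabets. With Γ_{A,B} = A_1 ∪ A_2 ∪ B and Γ_{A∪B} = (A∪B)_1 ∪ (A∪B)_2, and with R_{A,B} = (A_1 ∪ A_2 ∪ Ā_1 ∪ Ā_2 ∪ { (b,1)(b,2), bar(b,2)bar(b,1) : b∈B })* and h_{A,B} the morphism defined by (a,i)↦(a,i) and bar(a,i)↦bar(a,i) for a∈A, i∈{1,2}, (b,1)↦b, bar(b,1)↦b̄, (b,2)↦ε, bar(b,2)↦ε for b∈B, the following language equality holds: g_{A,B}^{-1}(D_{Γ_{A,B}}) ∩ D_{Γ_{A,B}} = h_{A,B}( R_{A,B} ∩ g_{A∪B}^{-1}(D_{Γ_{A∪B}}) ∩ D_{Γ_{A∪B}} ). -/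
/-- A letter of `Γ ∪ Γ̄`: a letter of `Γ` together with a flag which is `true`
for the barred copy. -/
abbrev BarLetter (Γ : Type) : Type := Γ × Bool

/-- The involution `bar` exchanging `Γ` and `Γ̄`. -/
def barL {Γ : Type} (x : BarLetter Γ) : BarLetter Γ := (x.1, !x.2)

/-- Dyck words over `Γ`: the least set containing `ε` and `a u1 ā u2` for
`u1, u2` Dyck and `a ∈ Γ`. -/
inductive Dyck (Γ : Type) : List (BarLetter Γ) → Prop
  | nil : Dyck Γ []
  | node (a : Γ) {u1 u2 : List (BarLetter Γ)} :
      Dyck Γ u1 → Dyck Γ u2 → Dyck Γ ((a, false) :: u1 ++ (a, true) :: u2)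

/-- `Γ_{A,B} = A₁ ∪ A₂ ∪ B` (the `Bool` in the left component is the index:
`false` codes 1 and `true` codes 2). -/
abbrev GamAB (A B : Type) : Type := (A × Bool) ⊕ B

/-- `Γ_{A∪B} = (A∪B)₁ ∪ (A∪B)₂`. -/
abbrev GamU (A B : Type) : Type := (A ⊕ B) × Bool

/-- The morphism `g_{A,B}`: `(a,1) ↦ (a,1)`, `bar(a,1) ↦ bar(a,2)`,
`(a,2) ↦ bar(a,1)`, `bar(a,2) ↦ (a,2)`, `b ↦ ε`, `b̄ ↦ ε`. -/
def gABProj {A B : Type} : BarLetter (GamAB A B) → List (BarLetter (GamAB A B))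
  | (Sum.inl (a, false), false) => [(Sum.inl (a, false), false)]
  | (Sum.inl (a, false), true) => [(Sum.inl (a, true), true)]
  | (Sum.inl (a, true), false) => [(Sum.inl (a, false), true)]
  | (Sum.inl (a, true), true) => [(Sum.inl (a, true), false)]
  | (Sum.inr _, _) => []

def gAB {A B : Type} (w : List (BarLetter (GamAB A B))) :
    List (BarLetter (GamAB A B)) :=
  (w.map gABProj).flatten

/-- The morphism `g_{A∪B}` (same four rules, applied to every letter of `A∪B`,
with no erasing). -/
def gUProj {A B : Type} : BarLetter (GamU A B) → BarLetter (GamU A B)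
  | ((c, false), false) => ((c, false), false)
  | ((c, false), true) => ((c, true), true)
  | ((c, true), false) => ((c, false), true)
  | ((c, true), true) => ((c, true), false)

def gU {A B : Type} (w : List (BarLetter (GamU A B))) : List (BarLetter (GamU A B)) :=
  w.map gUProj

/-- The morphism `h_{A,B}`: `(a,i) ↦ (a,i)`, `bar(a,i) ↦ bar(a,i)`,
`(b,1) ↦ b`, `bar(b,1) ↦ b̄`, `(b,2) ↦ ε`, `bar(b,2) ↦ ε`. -/
def hABProj {A B : Type} : BarLetter (GamU A B) → List (BarLetter (GamAB A B))
  | ((Sum.inl a, i), bb) => [(Sum.inl (a, i), bb)]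
  | ((Sum.inr b, false), bb) => [(Sum.inr b, bb)]
  | ((Sum.inr _, true), _) => []

def hAB {A B : Type} (w : List (BarLetter (GamU A B))) :
    List (BarLetter (GamAB A B)) :=
  (w.map hABProj).flatten

/-- The regular language
`R_{A,B} = (A₁ ∪ A₂ ∪ Ā₁ ∪ Ā₂ ∪ {(b,1)(b,2), bar(b,2)bar(b,1) : b ∈ B})*`. -/
inductive RabGen (A B : Type) : List (BarLetter (GamU A B)) → Prop
  | nil : RabGen A B []
  | aLetter (a : A) (i bb : Bool) {w : List (BarLetter (GamU A B))} :
      RabGen A B w → RabGen A B (((Sum.inl a, i), bb) :: w)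
  | bPair (b : B) {w : List (BarLetter (GamU A B))} :
      RabGen A B w →
      RabGen A B (((Sum.inr b, false), false) :: ((Sum.inr b, true), false) :: w)
  | bBarPair (b : B) {w : List (BarLetter (GamU A B))} :
      RabGen A B w →
      RabGen A B (((Sum.inr b, true), true) :: ((Sum.inr b, false), true) :: w)

/-!
For `⊆`, lift `w` by replacing each `b` by `(b,1)(b,2)` and each `b̄` by `bar(b,2) bar(b,1)`.
The lift lies in `R_{A,B}`, is a Dyck word, and is mapped back to `w` by `h_{A,B}`. Its image
under `g_{A∪B}` is `g_{A,B}(w)`, read in `Γ_{A∪B}`, with an adjacent pair `c c̄` inserted at the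
place of every letter of `B ∪ B̄`; inserting such pairs preserves Dyck words.

For `⊇`, both `h_{A,B}` and `g_{A,B} ∘ h_{A,B} = e ∘ g_{A∪B}`, where `e` erases the letters over
`B`, are letterwise relabelings that may erase a letter together with its bar, and such maps
preserve Dyck words.
-/

namespace Dyck

variable {Γ : Type}

theorem append {u v : List (BarLetter Γ)} (hu : Dyck Γ u) (hv : Dyck Γ v) :
    Dyck Γ (u ++ v) := by
  induction hu with
  | nil => simpa
  | node a h₁ _ _ ih₂ => simpa using Dyck.node a h₁ ih₂

theorem insert_pair {u v : List (BarLetter Γ)} (h : Dyck Γ (u ++ v)) (c : Γ) :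
    Dyck Γ (u ++ (c, false) :: (c, true) :: v) := by
  generalize hw : u ++ v = w at h
  induction h generalizing u v with
  | nil =>
    obtain ⟨rfl, rfl⟩ := List.append_eq_nil_iff.mp hw
    exact Dyck.node c Dyck.nil Dyck.nil
  | node a h₁ h₂ ih₁ ih₂ =>
    rcases u with _ | ⟨x, u⟩
    · subst hw
      simpa using Dyck.node c Dyck.nil (Dyck.node a h₁ h₂)
    simp only [List.cons_append, List.cons.injEq] at hw
    obtain ⟨rfl, hw⟩ := hw
    rcases List.append_eq_append_iff.mp hw with ⟨s, rfl, rfl⟩ | ⟨s, rfl, hs⟩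
    · simpa using Dyck.node a (ih₁ rfl) h₂
    rcases s with _ | ⟨y, s⟩
    · subst hs
      simpa using Dyck.node a (ih₁ (v := []) (by simp)) h₂
    · simp only [List.cons_append, List.cons.injEq] at hs
      obtain ⟨rfl, rfl⟩ := hs
      simpa using Dyck.node a h₁ (ih₂ rfl)

end Dyck

def relabel {Γ Γ' : Type} (f : Γ → Option Γ') (w : List (BarLetter Γ)) : List (BarLetter Γ') :=
  w.filterMap fun x => (f x.1).map (·, x.2)

theorem Dyck.relabel {Γ Γ' : Type} (f : Γ → Option Γ') {w : List (BarLetter Γ)}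
    (h : Dyck Γ w) : Dyck Γ' (relabel f w) := by
  induction h with
  | nil => exact Dyck.nil
  | node a _ _ ih₁ ih₂ =>
    cases hfa : f a with
    | none => simpa [_root_.relabel, hfa] using ih₁.append ih₂
    | some a' => simpa [_root_.relabel, hfa] using Dyck.node a' ih₁ ih₂

namespace GamAB

variable {A B : Type}

def toGamU : GamAB A B → GamU A B
  | Sum.inl (a, i) => (Sum.inl a, i)
  | Sum.inr b => (Sum.inr b, false)

def liftLetter : BarLetter (GamAB A B) → List (BarLetter (GamU A B))
  | (Sum.inl (a, i), s) => [((Sum.inl a, i), s)]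
  | (Sum.inr b, false) => [((Sum.inr b, false), false), ((Sum.inr b, true), false)]
  | (Sum.inr b, true) => [((Sum.inr b, true), true), ((Sum.inr b, false), true)]

def lift (w : List (BarLetter (GamAB A B))) : List (BarLetter (GamU A B)) :=
  w.flatMap liftLetter

theorem hAB_lift (w : List (BarLetter (GamAB A B))) : hAB (lift w) = w := by
  induction w with
  | nil => rfl
  | cons x w ih =>
    rcases x with ⟨⟨a, i⟩ | b, s⟩ <;> [skip; cases s] <;>
      simpa [hAB, lift, liftLetter, hABProj] using ih

theorem rabGen_lift (w : List (BarLetter (GamAB A B))) : RabGen A B (lift w) := by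
  induction w with
  | nil => exact RabGen.nil
  | cons x w ih =>
    rcases x with ⟨⟨a, i⟩ | b, _ | _⟩
    · exact RabGen.aLetter a i false ih
    · exact RabGen.aLetter a i true ih
    · exact RabGen.bPair b ih
    · exact RabGen.bBarPair b ih

theorem dyck_lift {w : List (BarLetter (GamAB A B))} (h : Dyck (GamAB A B) w) :
    Dyck (GamU A B) (lift w) := by
  induction h with
  | nil => exact Dyck.nil
  | node c _ _ ih₁ ih₂ =>
    rcases c with ⟨a, i⟩ | b
    · simpa [lift, liftLetter] using Dyck.node ((Sum.inl a, i) : GamU A B) ih₁ ih₂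
    · simpa [lift, liftLetter] using
        Dyck.node ((Sum.inr b, false) : GamU A B)
          (Dyck.node ((Sum.inr b, true) : GamU A B) ih₁ Dyck.nil) ih₂

theorem gU_liftLetter (x : BarLetter (GamAB A B)) :
    gU (liftLetter x) = relabel (some ∘ toGamU) (gABProj x) ∨
      ∃ c, gABProj x = [] ∧ gU (liftLetter x) = [(c, false), (c, true)] := by
  rcases x with ⟨⟨a, _ | _⟩ | b, _ | _⟩
  all_goals first
    | exact Or.inl rfl
    | exact Or.inr ⟨_, rfl, rfl⟩

theorem dyck_gU_lift {w : List (BarLetter (GamAB A B))} (u : List (BarLetter (GamU A B)))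
    (h : Dyck (GamU A B) (u ++ relabel (some ∘ toGamU) (gAB w))) :
    Dyck (GamU A B) (u ++ gU (lift w)) := by
  induction w generalizing u with
  | nil => simpa [gAB, gU, lift, relabel] using h
  | cons x w ih =>
    have hgAB : gAB (x :: w) = gABProj x ++ gAB w := by simp [gAB]
    have hlift : gU (lift (x :: w)) = gU (liftLetter x) ++ gU (lift w) := by simp [gU, lift]
    rw [hgAB, relabel, List.filterMap_append, ← relabel, ← relabel] at h
    rw [hlift]
    rcases gU_liftLetter x with hx | ⟨c, hx, hpair⟩
    · rw [← hx, ← List.append_assoc] at h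
      rw [← List.append_assoc]
      exact ih _ h
    · rw [hx, relabel, List.filterMap_nil, List.nil_append] at h
      simpa [hpair] using (ih u h).insert_pair c

end GamAB

section

variable {A B : Type}

def GamU.toGamAB : GamU A B → Option (GamAB A B)
  | (Sum.inl a, i) => some (Sum.inl (a, i))
  | (Sum.inr b, false) => some (Sum.inr b)
  | (Sum.inr _, true) => none

def GamU.eraseB : GamU A B → Option (GamAB A B)
  | (Sum.inl a, i) => some (Sum.inl (a, i))
  | (Sum.inr _, _) => none

theorem hAB_eq_relabel (w : List (BarLetter (GamU A B))) :
    hAB w = relabel GamU.toGamAB w := by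
  induction w with
  | nil => rfl
  | cons x w ih =>
    rcases x with ⟨⟨a | b, _ | _⟩, s⟩ <;> simpa [hAB, relabel, hABProj, GamU.toGamAB] using ih

theorem gAB_hAB_eq_relabel_gU (w : List (BarLetter (GamU A B))) :
    gAB (hAB w) = relabel GamU.eraseB (gU w) := by
  induction w with
  | nil => rfl
  | cons x w ih =>
    rcases x with ⟨⟨a | b, _ | _⟩, _ | _⟩ <;>
      simpa [gAB, hAB, gU, relabel, hABProj, gABProj, gUProj, GamU.eraseB] using ih

end

theorem dyck_intersection_homomorphic_image_general (A B : Type) :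
    { w : List (BarLetter (GamAB A B)) |
        Dyck (GamAB A B) (gAB w) ∧ Dyck (GamAB A B) w } =
    hAB '' { w : List (BarLetter (GamU A B)) |
        RabGen A B w ∧ Dyck (GamU A B) (gU w) ∧ Dyck (GamU A B) w } := by
  ext w
  constructor
  · rintro ⟨hg, hw⟩
    refine ⟨GamAB.lift w, ⟨GamAB.rabGen_lift w, ?_, GamAB.dyck_lift hw⟩, GamAB.hAB_lift w⟩
    simpa using GamAB.dyck_gU_lift [] (by simpa using hg.relabel (some ∘ GamAB.toGamU))
  · rintro ⟨v, ⟨-, hg, hv⟩, rfl⟩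
    rw [Set.mem_ofPred_eq, gAB_hAB_eq_relabel_gU, hAB_eq_relabel]
    exact ⟨hg.relabel _, hv.relabel _⟩

/-- `g_{A,B}⁻¹(D_{Γ_{A,B}}) ∩ D_{Γ_{A,B}} = h_{A,B}(R_{A,B} ∩ g_{A∪B}⁻¹(D_{Γ_{A∪B}}) ∩ D_{Γ_{A∪B}})`. -/
theorem dyck_intersection_homomorphic_image (A B : Type) [Finite A] [Finite B] :
    { w : List (BarLetter (GamAB A B)) |
        Dyck (GamAB A B) (gAB w) ∧ Dyck (GamAB A B) w } =
    hAB '' { w : List (BarLetter (GamU A B)) |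
        RabGen A B w ∧ Dyck (GamU A B) (gU w) ∧ Dyck (GamU A B) w } :=
  dyck_intersection_homomorphic_image_general A B
end
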